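/- arXiv:2501.13208 — 7 statements merged into one kernel-verified Lean document; each statement's English description precedes it below -/
import Mathlib

section
/- Let e = {x,y} be an edge of T, let T_x be the descendant subtree of x with respect to y and T_y the descendant subtree of y with respect to x, with leaf sets L_x and L_y (so L = L_x ∪ L_y). Fix θ̂ ∈ (−1,1)^E and a leaf configuration τ_L ∈ {±1}^L, and write Z_x := Z_x^{θ̂,T_x}(τ_{L_x}) and Z_y := Z_y^{θ̂,T_y}(τ_{L_y}). Then (∂/∂θ̂_e) ℓ(θ̂; τ_L) = Z_x·Z_y / (1 + Z_x·Z_y·θ̂_e). -/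
open Finset
open scoped Classical

noncomputable section

namespace CFN

variable {V : Type*} [Fintype V] [DecidableEq V]

/-- The `±1` spin attached to a Boolean. -/
def spin (b : Bool) : ℝ := if b then 1 else -1

/-- The product of the spins at the two endpoints of an unordered edge. -/
def edgeSpin (σ : V → Bool) : Sym2 V → ℝ :=
  Sym2.lift ⟨fun x y => spin (σ x) * spin (σ y), fun x y => mul_comm _ _⟩

/-- The CFN weight of a configuration: `(1/2) · ∏_{e={x,y}∈F} (1 + σ_x σ_y θ_e)/2`. -/
def cfnWeight (F : Finset (Sym2 V)) (θ : Sym2 V → ℝ) (σ : V → Bool) : ℝ :=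
  (1 / 2) * ∏ e ∈ F, (1 + edgeSpin σ e * θ e) / 2

/-- The probability of the event `A` under the CFN measure with vertex set `W` and edge
set `F` (the event should only depend on the coordinates in `W`; configurations are
represented as functions on the ambient vertex type, whence the normalizing factor). -/
def cfnProb (W : Finset V) (F : Finset (Sym2 V)) (θ : Sym2 V → ℝ)
    (A : Set (V → Bool)) : ℝ :=
  ((2 : ℝ) ^ W.card / (2 : ℝ) ^ Fintype.card V) *
    ∑ σ : V → Bool, Set.indicator A (cfnWeight F θ) σ

/-- Expectation of `f` under the CFN measure on the full vertex set with edge set `F`. -/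
def cfnExp (F : Finset (Sym2 V)) (θ : Sym2 V → ℝ) (f : (V → Bool) → ℝ) : ℝ :=
  ∑ σ : V → Bool, cfnWeight F θ σ * f σ

/-- The magnetization at `u` for the tree with vertex set `W`, edge set `F`, leaf set
`Lu`, parameter `θ`, and observed leaf configuration `τ`:
`P_θ(σ_u = +1 | σ_{L_u} = τ_{L_u}) − P_θ(σ_u = −1 | σ_{L_u} = τ_{L_u})`. -/
def magnetization (W : Finset V) (F : Finset (Sym2 V)) (θ : Sym2 V → ℝ)
    (u : V) (Lu : Finset V) (τ : V → Bool) : ℝ :=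
  (cfnProb W F θ {η | η u = true ∧ ∀ x ∈ Lu, η x = τ x} -
      cfnProb W F θ {η | η u = false ∧ ∀ x ∈ Lu, η x = τ x}) /
    cfnProb W F θ {η | ∀ x ∈ Lu, η x = τ x}

variable (G : SimpleGraph V) [DecidableRel G.Adj]

/-- The vertex set of the descendant subtree of `u` with respect to `v`: all vertices `w`
whose shortest path to `v` passes through `u`. -/
def descVerts (u v : V) : Finset V :=
  Finset.univ.filter fun w => G.dist w v = G.dist w u + G.dist u v

/-- The edge set of the descendant subtree of `u` with respect to `v`. -/
def descEdges (u v : V) : Finset (Sym2 V) :=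
  G.edgeFinset.filter fun e => ∀ x ∈ e, x ∈ descVerts G u v

/-- The leaf set of the tree `G`. -/
def leaves : Finset V := Finset.univ.filter fun w => G.degree w = 1

/-- The leaf set of the descendant subtree of `u` with respect to `v`. -/
def descLeaves (u v : V) : Finset V :=
  (descVerts G u v).filter fun w => G.degree w = 1

/-- The magnetization at `u` computed on the descendant subtree of `u` with respect to
`v`, with parameters `θ` and leaf data taken from the configuration `τ`. -/
def descMag (u v : V) (θ : Sym2 V → ℝ) (τ : V → Bool) : ℝ :=
  magnetization (descVerts G u v) (descEdges G u v) θ u (descLeaves G u v) τ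

end CFN


section Aux

open SimpleGraph

variable {V : Type*} [DecidableEq V] {G : SimpleGraph V}

lemma CFNaux_dist_split (hc : G.Connected) {u v c : V} {p : G.Walk u v}
    (hp : p.length = G.dist u v) (hcs : c ∈ p.support) :
    G.dist u v = G.dist u c + G.dist c v := by
  have h1 := SimpleGraph.dist_le (p.takeUntil c hcs)
  have h2 := SimpleGraph.dist_le (p.dropUntil c hcs)
  have h3 : (p.takeUntil c hcs).length + (p.dropUntil c hcs).length = p.length := by
    rw [← SimpleGraph.Walk.length_append, p.take_spec hcs]
  have h4 := hc.dist_triangle (u := u) (v := c) (w := v)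
  omega

lemma CFNaux_concat_isPath {u v w : V} {p : G.Walk u v} (hp : p.IsPath) (h : G.Adj v w)
    (hw : w ∉ p.support) : (p.concat h).IsPath := by
  rw [← SimpleGraph.Walk.isPath_reverse_iff, SimpleGraph.Walk.reverse_concat]
  exact (hp.reverse).cons (by simpa using hw)

lemma CFNaux_side_dichotomy (hT : G.IsTree) {x y : V} (hxy : G.Adj x y) (w : V) :
    G.dist w y = G.dist w x + 1 ∨ G.dist w x = G.dist w y + 1 := by
  have hc := hT.isConnected
  have hxy1 : G.dist x y = 1 := SimpleGraph.dist_eq_one_iff_adj.mpr hxy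
  obtain ⟨p, hp, hpl⟩ := hc.exists_path_of_dist w y
  by_cases hx : x ∈ p.support
  · left
    have := CFNaux_dist_split hc hpl hx
    rw [this, hxy1]
  · right
    obtain ⟨q, hq, hql⟩ := hc.exists_path_of_dist w x
    by_cases hy : y ∈ q.support
    · have := CFNaux_dist_split hc hql hy
      rw [this, SimpleGraph.dist_eq_one_iff_adj.mpr hxy.symm]
    · exfalso
      have hq' : (q.concat hxy).IsPath := CFNaux_concat_isPath hq hxy hy
      have := hT.IsAcyclic.path_unique ⟨p, hp⟩ ⟨q.concat hxy, hq'⟩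
      apply hx
      have : p = q.concat hxy := congrArg Subtype.val this
      rw [this, SimpleGraph.Walk.support_concat]
      simp

lemma CFNaux_mixed_edge (hT : G.IsTree) {x y a b : V} (hxy : G.Adj x y) (hab : G.Adj a b)
    (ha : G.dist a y = G.dist a x + 1) (hb : G.dist b x = G.dist b y + 1) :
    a = x ∧ b = y := by
  have hc := hT.isConnected
  have hxy1 : G.dist x y = 1 := SimpleGraph.dist_eq_one_iff_adj.mpr hxy
  have hyx1 : G.dist y x = 1 := SimpleGraph.dist_eq_one_iff_adj.mpr hxy.symm
  obtain ⟨p, hp, hpl⟩ := hc.exists_path_of_dist a x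
  have hyp : y ∉ p.support := by
    intro hy
    have := CFNaux_dist_split hc hpl hy
    rw [hyx1] at this
    omega
  have hP : (p.concat hxy).IsPath := CFNaux_concat_isPath hp hxy hyp
  obtain ⟨q, hq, hql⟩ := hc.exists_path_of_dist b y
  have haq : a ∉ q.support := by
    intro haq
    have hsplit := CFNaux_dist_split hc hql haq
    have hba : G.dist b a = 1 := SimpleGraph.dist_eq_one_iff_adj.mpr hab.symm
    have htri := hc.dist_triangle (u := b) (v := a) (w := x)
    rw [hba] at hsplit htri
    omega
  have hQ : (SimpleGraph.Walk.cons hab q).IsPath := hq.cons haq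
  have heq := hT.IsAcyclic.path_unique ⟨p.concat hxy, hP⟩ ⟨SimpleGraph.Walk.cons hab q, hQ⟩
  have heqw : p.concat hxy = SimpleGraph.Walk.cons hab q := congrArg Subtype.val heq
  have hxP : x ∈ (p.concat hxy).support := by
    rw [SimpleGraph.Walk.support_concat]
    simp [SimpleGraph.Walk.end_mem_support]
  rw [heqw, SimpleGraph.Walk.support_cons] at hxP
  have hax : a = x := by
    rcases List.mem_cons.mp hxP with h | h
    · exact h.symm
    · exfalso
      have := CFNaux_dist_split hc hql h
      rw [hxy1] at this
      omega
  refine ⟨hax, ?_⟩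
  have hbx1 : G.dist b x = 1 := SimpleGraph.dist_eq_one_iff_adj.mpr (hax ▸ hab).symm
  have : G.dist b y = 0 := by omega
  exact (hc.dist_eq_zero_iff).mp this

end Aux

section Aux2

variable {V : Type*} [Fintype V] [DecidableEq V]

lemma CFNaux_sum_factor (S : Finset V) (f g : (V → Bool) → ℝ)
    (hf : ∀ σ σ' : V → Bool, (∀ w ∈ S, σ w = σ' w) → f σ = f σ')
    (hg : ∀ σ σ' : V → Bool, (∀ w ∉ S, σ w = σ' w) → g σ = g σ') :
    (∑ σ : V → Bool, f σ * g σ) * 2 ^ Fintype.card V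
      = (∑ σ : V → Bool, f σ) * (∑ σ : V → Bool, g σ) := by
  classical
  set e := (Equiv.piEquivPiSubtypeProd (fun w => w ∈ S) fun _ => Bool) with he
  have key : ∀ F : (V → Bool) → ℝ, ∑ σ : V → Bool, F σ = ∑ p, F (e.symm p) :=
    fun F => (Equiv.sum_comp e.symm F).symm
  have hmix : ∀ a b w (h : w ∈ S), e.symm (a, b) w = a ⟨w, h⟩ := by
    intro a b w h
    simp [he, Equiv.piEquivPiSubtypeProd, h]
  have hmix' : ∀ a b w (h : w ∉ S), e.symm (a, b) w = b ⟨w, h⟩ := by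
    intro a b w h
    simp [he, Equiv.piEquivPiSubtypeProd, h]
  have hfs : ∀ a b b', f (e.symm (a, b)) = f (e.symm (a, b')) := by
    intro a b b'
    apply hf
    intro w hw
    rw [hmix a b w hw, hmix a b' w hw]
  have hgs : ∀ a a' b, g (e.symm (a, b)) = g (e.symm (a', b)) := by
    intro a a' b
    apply hg
    intro w hw
    rw [hmix' a b w hw, hmix' a' b w hw]
  set d : ∀ w : {w // w ∈ S}, Bool := fun _ => true with hd
  set d' : ∀ w : {w // ¬ w ∈ S}, Bool := fun _ => true with hd'
  have h1 : ∑ σ : V → Bool, f σ * g σ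
      = (∑ a, f (e.symm (a, d'))) * (∑ b, g (e.symm (d, b))) := by
    rw [key, Fintype.sum_prod_type, Finset.sum_mul_sum]
    refine Finset.sum_congr rfl fun a _ => Finset.sum_congr rfl fun b _ => ?_
    rw [hfs a b d', hgs a d b]
  have h2 : ∑ σ : V → Bool, f σ
      = (Fintype.card (∀ w : {w // ¬ w ∈ S}, Bool) : ℝ) * ∑ a, f (e.symm (a, d')) := by
    rw [key, Fintype.sum_prod_type, Finset.mul_sum]
    refine Finset.sum_congr rfl fun a _ => ?_
    calc ∑ b, f (e.symm (a, b)) = ∑ _b : ∀ w : {w // ¬ w ∈ S}, Bool, f (e.symm (a, d')) :=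
          Finset.sum_congr rfl fun b _ => hfs a b d'
      _ = _ := by rw [Finset.sum_const, Finset.card_univ, nsmul_eq_mul]
  have h3 : ∑ σ : V → Bool, g σ
      = (Fintype.card (∀ w : {w // w ∈ S}, Bool) : ℝ) * ∑ b, g (e.symm (d, b)) := by
    rw [key, Fintype.sum_prod_type, Finset.sum_comm, Finset.mul_sum]
    refine Finset.sum_congr rfl fun b _ => ?_
    calc ∑ a, g (e.symm (a, b)) = ∑ _a : ∀ w : {w // w ∈ S}, Bool, g (e.symm (d, b)) :=
          Finset.sum_congr rfl fun a _ => hgs a d b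
      _ = _ := by rw [Finset.sum_const, Finset.card_univ, nsmul_eq_mul]
  have hcard : (Fintype.card (∀ w : {w // w ∈ S}, Bool))
      * (Fintype.card (∀ w : {w // ¬ w ∈ S}, Bool)) = 2 ^ Fintype.card V := by
    rw [← Fintype.card_prod, ← Fintype.card_congr e]
    simp
  have hcard' : ((Fintype.card (∀ w : {w // w ∈ S}, Bool)) : ℝ)
      * ((Fintype.card (∀ w : {w // ¬ w ∈ S}, Bool)) : ℝ) = 2 ^ Fintype.card V := by
    rw [← Nat.cast_mul, hcard]
    push_cast
    ring
  rw [h1, h2, h3, ← hcard']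
  ring

lemma CFNaux_edgeSpin_pm (σ : V → Bool) (e : Sym2 V) :
    CFN.edgeSpin σ e = 1 ∨ CFN.edgeSpin σ e = -1 := by
  induction e using Sym2.ind with
  | _ a b => cases ha : σ a <;> cases hb : σ b <;> simp [CFN.edgeSpin, CFN.spin, ha, hb]

lemma CFNaux_edgeSpin_congr {σ σ' : V → Bool} {e : Sym2 V} (h : ∀ z ∈ e, σ z = σ' z) :
    CFN.edgeSpin σ e = CFN.edgeSpin σ' e := by
  induction e using Sym2.ind with
  | _ a b =>
    have ha := h a (Sym2.mem_mk_left a b)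
    have hb := h b (Sym2.mem_mk_right a b)
    simp [CFN.edgeSpin, ha, hb]

lemma CFNaux_cfnWeight_pos {F : Finset (Sym2 V)} {θ : Sym2 V → ℝ}
    (hθ : ∀ e ∈ F, θ e ∈ Set.Ioo (-1 : ℝ) 1) (σ : V → Bool) :
    0 < CFN.cfnWeight F θ σ := by
  unfold CFN.cfnWeight
  apply mul_pos (by norm_num)
  apply Finset.prod_pos
  intro e he
  obtain ⟨h1, h2⟩ := hθ e he
  rcases CFNaux_edgeSpin_pm σ e with h | h <;> rw [h] <;> linarith

lemma CFNaux_cfnWeight_congr {F : Finset (Sym2 V)} {θ : Sym2 V → ℝ} {σ σ' : V → Bool}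
    (h : ∀ e ∈ F, ∀ z ∈ e, σ z = σ' z) :
    CFN.cfnWeight F θ σ = CFN.cfnWeight F θ σ' := by
  unfold CFN.cfnWeight
  congr 1
  exact Finset.prod_congr rfl fun e he => by rw [CFNaux_edgeSpin_congr (h e he)]

lemma CFNaux_indicator_sum_pos {F : Finset (Sym2 V)} {θ : Sym2 V → ℝ}
    (hθ : ∀ e ∈ F, θ e ∈ Set.Ioo (-1 : ℝ) 1) (L : Finset V) (τ : V → Bool) :
    0 < ∑ σ : V → Bool, Set.indicator {η | ∀ z ∈ L, η z = τ z} (CFN.cfnWeight F θ) σ := by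
  apply Finset.sum_pos'
  · intro σ _
    exact Set.indicator_nonneg (fun a _ => (CFNaux_cfnWeight_pos hθ a).le) σ
  · refine ⟨τ, Finset.mem_univ τ, ?_⟩
    rw [Set.indicator_of_mem (by intro z _; rfl)]
    exact CFNaux_cfnWeight_pos hθ τ

lemma CFNaux_indicator_agree {A : Set (V → Bool)} {f : (V → Bool) → ℝ} {σ σ' : V → Bool}
    (hmem : σ ∈ A ↔ σ' ∈ A) (hval : f σ = f σ') :
    A.indicator f σ = A.indicator f σ' := by
  by_cases h : σ ∈ A
  · rw [Set.indicator_of_mem h, Set.indicator_of_mem (hmem.mp h), hval]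
  · rw [Set.indicator_of_notMem h, Set.indicator_of_notMem (fun h' => h (hmem.mpr h'))]

lemma CFNaux_magnetization_eq (W : Finset V) (F : Finset (Sym2 V)) (θ : Sym2 V → ℝ)
    (u : V) (L : Finset V) (τ : V → Bool) :
    CFN.magnetization W F θ u L τ =
      (∑ σ : V → Bool, Set.indicator {η | ∀ z ∈ L, η z = τ z}
          (fun η => CFN.spin (η u) * CFN.cfnWeight F θ η) σ) /
      (∑ σ : V → Bool, Set.indicator {η | ∀ z ∈ L, η z = τ z} (CFN.cfnWeight F θ) σ) := by
  unfold CFN.magnetization CFN.cfnProb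
  have hc0 : ((2 : ℝ) ^ W.card / (2 : ℝ) ^ Fintype.card V) ≠ 0 := by positivity
  rw [← mul_sub, mul_div_mul_left _ _ hc0]
  congr 1
  rw [← Finset.sum_sub_distrib]
  refine Finset.sum_congr rfl fun σ _ => ?_
  simp only [Set.indicator_apply, Set.mem_setOf_eq]
  by_cases h : ∀ z ∈ L, σ z = τ z
  · by_cases hb : σ u = true
    · rw [if_pos ⟨hb, h⟩, if_neg (by simp [hb]), if_pos h]
      simp [CFN.spin, hb]
    · have hb' : σ u = false := by simpa using hb
      rw [if_neg (by simp [hb']), if_pos ⟨hb', h⟩, if_pos h]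
      simp [CFN.spin, hb']
  · rw [if_neg (by tauto), if_neg (by tauto), if_neg h]
    ring

end Aux2

/-- **Lemma (likelihood and magnetization).**
For an edge `e = {x,y}` of the tree, with `Z_x`, `Z_y` the magnetizations at `x` and `y`
on the descendant subtrees `T_x` (of `x` w.r.t. `y`) and `T_y` (of `y` w.r.t. `x`):
`∂/∂θ̂_e ℓ(θ̂; τ_L) = Z_x Z_y / (1 + Z_x Z_y θ̂_e)`. -/
theorem loglikelihood_derivative
    {V : Type*} [Fintype V] [DecidableEq V] (G : SimpleGraph V) [DecidableRel G.Adj]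
    (hT : G.IsTree) (hbin : ∀ w : V, G.degree w = 1 ∨ G.degree w = 3)
    (x y : V) (hxy : G.Adj x y)
    (θh : Sym2 V → ℝ) (hθh : ∀ e ∈ G.edgeFinset, θh e ∈ Set.Ioo (-1 : ℝ) 1)
    (τ : V → Bool) :
    deriv (fun t : ℝ =>
        Real.log (CFN.cfnProb Finset.univ G.edgeFinset (Function.update θh s(x, y) t)
          {η | ∀ z ∈ CFN.leaves G, η z = τ z})) (θh s(x, y)) =
      CFN.descMag G x y θh τ * CFN.descMag G y x θh τ /
        (1 + CFN.descMag G x y θh τ * CFN.descMag G y x θh τ * θh s(x, y)) := by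
  classical
  have hc := hT.isConnected
  have hxy1 : G.dist x y = 1 := SimpleGraph.dist_eq_one_iff_adj.mpr hxy
  have hyx1 : G.dist y x = 1 := SimpleGraph.dist_eq_one_iff_adj.mpr hxy.symm
  have hdich := fun w => CFNaux_side_dichotomy hT hxy w
  have hSmem : ∀ w, w ∈ CFN.descVerts G x y ↔ G.dist w y = G.dist w x + 1 := by
    intro w; simp [CFN.descVerts, hxy1]
  have hS'mem : ∀ w, w ∈ CFN.descVerts G y x ↔ G.dist w x = G.dist w y + 1 := by
    intro w; simp [CFN.descVerts, hyx1]
  have hcompl : ∀ w, w ∈ CFN.descVerts G y x ↔ w ∉ CFN.descVerts G x y := by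
    intro w; rw [hSmem, hS'mem]
    rcases hdich w with h | h <;> constructor <;> intro h' <;> omega
  have hxS : x ∈ CFN.descVerts G x y := by
    rw [hSmem]; simp [hxy1, SimpleGraph.dist_self]
  have hyS' : y ∈ CFN.descVerts G y x := by
    rw [hS'mem]; simp [hyx1, SimpleGraph.dist_self]
  have hFmem : ∀ e, e ∈ CFN.descEdges G x y ↔
      e ∈ G.edgeFinset ∧ ∀ z ∈ e, z ∈ CFN.descVerts G x y := by
    intro e; unfold CFN.descEdges; exact Finset.mem_filter
  have hF'mem : ∀ e, e ∈ CFN.descEdges G y x ↔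
      e ∈ G.edgeFinset ∧ ∀ z ∈ e, z ∈ CFN.descVerts G y x := by
    intro e; unfold CFN.descEdges; exact Finset.mem_filter
  have hne_of_F : s(x, y) ∉ CFN.descEdges G x y := by
    intro h
    have hy' := ((hFmem _).mp h).2 y (Sym2.mem_mk_right x y)
    rw [hSmem] at hy'
    rw [SimpleGraph.dist_self, hyx1] at hy'
    omega
  have hne_of_F' : s(x, y) ∉ CFN.descEdges G y x := by
    intro h
    have hx' := ((hF'mem _).mp h).2 x (Sym2.mem_mk_left x y)
    rw [hS'mem] at hx'
    rw [SimpleGraph.dist_self, hxy1] at hx'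
    omega
  have hdisjFF' : Disjoint (CFN.descEdges G x y) (CFN.descEdges G y x) := by
    rw [Finset.disjoint_left]
    intro e heF heF'
    have h1 := ((hFmem _).mp heF).2 e.out.1 (Sym2.out_fst_mem e)
    have h2 := ((hF'mem _).mp heF').2 e.out.1 (Sym2.out_fst_mem e)
    rw [hcompl] at h2; exact h2 h1
  have hinsert : s(x, y) ∉ CFN.descEdges G x y ∪ CFN.descEdges G y x := by
    rw [Finset.mem_union]; rintro (h | h)
    · exact hne_of_F h
    · exact hne_of_F' h
  have hEpart : G.edgeFinset = insert s(x, y) (CFN.descEdges G x y ∪ CFN.descEdges G y x) := by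
    ext e
    constructor
    · intro he
      rcases eq_or_ne e s(x, y) with rfl | hne
      · exact Finset.mem_insert_self _ _
      · refine Finset.mem_insert_of_mem ?_
        rw [Finset.mem_union]
        revert he hne
        induction e using Sym2.ind with
        | _ a b =>
          intro he hne
          have hab : G.Adj a b := SimpleGraph.mem_edgeFinset.mp he
          rcases hdich a with hA | hA <;> rcases hdich b with hB | hB
          · left
            refine (hFmem _).mpr ⟨he, ?_⟩
            intro z hz
            rcases Sym2.mem_iff.mp hz with rfl | rfl
            · exact (hSmem _).mpr hA
            · exact (hSmem _).mpr hB
          · exfalso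
            obtain ⟨rfl, rfl⟩ := CFNaux_mixed_edge hT hxy hab hA hB
            exact hne rfl
          · exfalso
            obtain ⟨rfl, rfl⟩ := CFNaux_mixed_edge hT hxy.symm hab hA hB
            exact hne Sym2.eq_swap
          · right
            refine (hF'mem _).mpr ⟨he, ?_⟩
            intro z hz
            rcases Sym2.mem_iff.mp hz with rfl | rfl
            · exact (hS'mem _).mpr hA
            · exact (hS'mem _).mpr hB
    · intro he
      rcases Finset.mem_insert.mp he with rfl | h
      · exact SimpleGraph.mem_edgeFinset.mpr hxy
      · rcases Finset.mem_union.mp h with h | h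
        · exact ((hFmem _).mp h).1
        · exact ((hF'mem _).mp h).1
  have hLxmem : ∀ z, z ∈ CFN.descLeaves G x y ↔ z ∈ CFN.descVerts G x y ∧ G.degree z = 1 := by
    intro z; unfold CFN.descLeaves; exact Finset.mem_filter
  have hLymem : ∀ z, z ∈ CFN.descLeaves G y x ↔ z ∈ CFN.descVerts G y x ∧ G.degree z = 1 := by
    intro z; unfold CFN.descLeaves; exact Finset.mem_filter
  have hunion : CFN.leaves G = CFN.descLeaves G x y ∪ CFN.descLeaves G y x := by
    ext z
    rw [Finset.mem_union, hLxmem, hLymem]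
    unfold CFN.leaves
    rw [Finset.mem_filter]
    constructor
    · rintro ⟨-, hz⟩
      rcases hdich z with h | h
      · exact Or.inl ⟨(hSmem z).mpr h, hz⟩
      · exact Or.inr ⟨(hS'mem z).mpr h, hz⟩
    · rintro (⟨-, h⟩ | ⟨-, h⟩) <;> exact ⟨Finset.mem_univ z, h⟩
  have hsplit : ∀ σ : V → Bool, (∀ z ∈ CFN.leaves G, σ z = τ z) ↔
      ((∀ z ∈ CFN.descLeaves G x y, σ z = τ z) ∧ (∀ z ∈ CFN.descLeaves G y x, σ z = τ z)) := by
    intro σ; rw [hunion]; exact Finset.forall_mem_union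
  -- the four half-tree functions
  set fx : (V → Bool) → ℝ := Set.indicator {η | ∀ z ∈ CFN.descLeaves G x y, η z = τ z}
      (CFN.cfnWeight (CFN.descEdges G x y) θh) with hfxdef
  set gx : (V → Bool) → ℝ := Set.indicator {η | ∀ z ∈ CFN.descLeaves G x y, η z = τ z}
      (fun η => CFN.spin (η x) * CFN.cfnWeight (CFN.descEdges G x y) θh η) with hgxdef
  set fy : (V → Bool) → ℝ := Set.indicator {η | ∀ z ∈ CFN.descLeaves G y x, η z = τ z}
      (CFN.cfnWeight (CFN.descEdges G y x) θh) with hfydef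
  set gy : (V → Bool) → ℝ := Set.indicator {η | ∀ z ∈ CFN.descLeaves G y x, η z = τ z}
      (fun η => CFN.spin (η y) * CFN.cfnWeight (CFN.descEdges G y x) θh η) with hgydef
  have h2n : (0 : ℝ) < 2 ^ Fintype.card V := by positivity
  -- pointwise factorization of the full weight
  have hpoint : ∀ (t : ℝ) (σ : V → Bool),
      Set.indicator {η : V → Bool | ∀ z ∈ CFN.leaves G, η z = τ z}
        (CFN.cfnWeight G.edgeFinset (Function.update θh s(x, y) t)) σ
      = fx σ * fy σ + gx σ * gy σ * t := by
    intro t σ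
    by_cases hσ : σ ∈ {η : V → Bool | ∀ z ∈ CFN.leaves G, η z = τ z}
    · have hxy' := (hsplit σ).mp hσ
      have hx' : σ ∈ {η : V → Bool | ∀ z ∈ CFN.descLeaves G x y, η z = τ z} := hxy'.1
      have hy' : σ ∈ {η : V → Bool | ∀ z ∈ CFN.descLeaves G y x, η z = τ z} := hxy'.2
      rw [Set.indicator_of_mem hσ, hfxdef, hgxdef, hfydef, hgydef,
        Set.indicator_of_mem hx', Set.indicator_of_mem hy',
        Set.indicator_of_mem hx', Set.indicator_of_mem hy']
      unfold CFN.cfnWeight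
      rw [hEpart, Finset.prod_insert hinsert, Finset.prod_union hdisjFF']
      have hFprod : ∏ e ∈ CFN.descEdges G x y,
          (1 + CFN.edgeSpin σ e * Function.update θh s(x, y) t e) / 2
          = ∏ e ∈ CFN.descEdges G x y, (1 + CFN.edgeSpin σ e * θh e) / 2 :=
        Finset.prod_congr rfl fun e he => by
          rw [Function.update_of_ne (by rintro rfl; exact hne_of_F he) t θh]
      have hF'prod : ∏ e ∈ CFN.descEdges G y x,
          (1 + CFN.edgeSpin σ e * Function.update θh s(x, y) t e) / 2
          = ∏ e ∈ CFN.descEdges G y x, (1 + CFN.edgeSpin σ e * θh e) / 2 :=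
        Finset.prod_congr rfl fun e he => by
          rw [Function.update_of_ne (by rintro rfl; exact hne_of_F' he) t θh]
      rw [hFprod, hF'prod, Function.update_self]
      have hes : CFN.edgeSpin σ s(x, y) = CFN.spin (σ x) * CFN.spin (σ y) := by
        simp [CFN.edgeSpin]
      rw [hes]
      ring
    · rw [Set.indicator_of_notMem hσ]
      have h' : ¬ ((σ ∈ {η : V → Bool | ∀ z ∈ CFN.descLeaves G x y, η z = τ z})
          ∧ (σ ∈ {η : V → Bool | ∀ z ∈ CFN.descLeaves G y x, η z = τ z})) :=
        fun hcc => hσ ((hsplit σ).mpr hcc)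
      rcases not_and_or.mp h' with h | h
      · have h1 : fx σ = 0 := by rw [hfxdef]; exact Set.indicator_of_notMem h _
        have h2 : gx σ = 0 := by rw [hgxdef]; exact Set.indicator_of_notMem h _
        rw [h1, h2]; ring
      · have h1 : fy σ = 0 := by rw [hfydef]; exact Set.indicator_of_notMem h _
        have h2 : gy σ = 0 := by rw [hgydef]; exact Set.indicator_of_notMem h _
        rw [h1, h2]; ring
  -- dependence of the half-tree functions on the two vertex classes
  have hfx_dep : ∀ σ σ' : V → Bool, (∀ w ∈ CFN.descVerts G x y, σ w = σ' w) → fx σ = fx σ' := by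
    intro σ σ' hag
    rw [hfxdef]
    refine CFNaux_indicator_agree ?_ ?_
    · constructor <;> intro h z hz
      · rw [← hag z ((hLxmem z).mp hz).1]; exact h z hz
      · rw [hag z ((hLxmem z).mp hz).1]; exact h z hz
    · exact CFNaux_cfnWeight_congr fun e he z hz => hag z (((hFmem e).mp he).2 z hz)
  have hgx_dep : ∀ σ σ' : V → Bool, (∀ w ∈ CFN.descVerts G x y, σ w = σ' w) → gx σ = gx σ' := by
    intro σ σ' hag
    rw [hgxdef]
    refine CFNaux_indicator_agree ?_ ?_
    · constructor <;> intro h z hz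
      · rw [← hag z ((hLxmem z).mp hz).1]; exact h z hz
      · rw [hag z ((hLxmem z).mp hz).1]; exact h z hz
    · rw [hag x hxS,
        CFNaux_cfnWeight_congr fun e he z hz => hag z (((hFmem e).mp he).2 z hz)]
  have hfy_dep : ∀ σ σ' : V → Bool, (∀ w ∉ CFN.descVerts G x y, σ w = σ' w) → fy σ = fy σ' := by
    intro σ σ' hag
    rw [hfydef]
    refine CFNaux_indicator_agree ?_ ?_
    · constructor <;> intro h z hz
      · rw [← hag z ((hcompl z).mp ((hLymem z).mp hz).1)]; exact h z hz
      · rw [hag z ((hcompl z).mp ((hLymem z).mp hz).1)]; exact h z hz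
    · exact CFNaux_cfnWeight_congr fun e he z hz =>
        hag z ((hcompl z).mp (((hF'mem e).mp he).2 z hz))
  have hgy_dep : ∀ σ σ' : V → Bool, (∀ w ∉ CFN.descVerts G x y, σ w = σ' w) → gy σ = gy σ' := by
    intro σ σ' hag
    rw [hgydef]
    refine CFNaux_indicator_agree ?_ ?_
    · constructor <;> intro h z hz
      · rw [← hag z ((hcompl z).mp ((hLymem z).mp hz).1)]; exact h z hz
      · rw [hag z ((hcompl z).mp ((hLymem z).mp hz).1)]; exact h z hz
    · rw [hag y ((hcompl y).mp hyS'),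
        CFNaux_cfnWeight_congr fun e he z hz =>
          hag z ((hcompl z).mp (((hF'mem e).mp he).2 z hz))]
  have hsum1 := CFNaux_sum_factor (CFN.descVerts G x y) fx fy hfx_dep hfy_dep
  have hsum2 := CFNaux_sum_factor (CFN.descVerts G x y) gx gy hgx_dep hgy_dep
  set N₁ := ∑ σ : V → Bool, fx σ with hN₁def
  set M₁ := ∑ σ : V → Bool, gx σ with hM₁def
  set N₂ := ∑ σ : V → Bool, fy σ with hN₂def
  set M₂ := ∑ σ : V → Bool, gy σ with hM₂def
  -- the closed form of the likelihood
  have hL : ∀ t : ℝ, CFN.cfnProb Finset.univ G.edgeFinset (Function.update θh s(x, y) t)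
      {η : V → Bool | ∀ z ∈ CFN.leaves G, η z = τ z}
      = (N₁ * N₂ + M₁ * M₂ * t) / 2 ^ Fintype.card V := by
    intro t
    unfold CFN.cfnProb
    rw [Finset.card_univ, div_self h2n.ne', one_mul]
    have e1 : ∑ σ : V → Bool, fx σ * fy σ = N₁ * N₂ / 2 ^ Fintype.card V := by
      rw [eq_div_iff h2n.ne']; exact hsum1
    have e2 : ∑ σ : V → Bool, gx σ * gy σ = M₁ * M₂ / 2 ^ Fintype.card V := by
      rw [eq_div_iff h2n.ne']; exact hsum2
    calc ∑ σ : V → Bool, Set.indicator {η : V → Bool | ∀ z ∈ CFN.leaves G, η z = τ z}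
          (CFN.cfnWeight G.edgeFinset (Function.update θh s(x, y) t)) σ
        = ∑ σ : V → Bool, (fx σ * fy σ + gx σ * gy σ * t) :=
          Finset.sum_congr rfl fun σ _ => hpoint t σ
      _ = (∑ σ : V → Bool, fx σ * fy σ) + (∑ σ : V → Bool, gx σ * gy σ) * t := by
          rw [Finset.sum_add_distrib, ← Finset.sum_mul]
      _ = N₁ * N₂ / 2 ^ Fintype.card V + M₁ * M₂ / 2 ^ Fintype.card V * t := by
          rw [e1, e2]
      _ = (N₁ * N₂ + M₁ * M₂ * t) / 2 ^ Fintype.card V := by ring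
  -- positivity facts
  have hθF : ∀ e ∈ CFN.descEdges G x y, θh e ∈ Set.Ioo (-1 : ℝ) 1 :=
    fun e he => hθh e ((hFmem e).mp he).1
  have hθF' : ∀ e ∈ CFN.descEdges G y x, θh e ∈ Set.Ioo (-1 : ℝ) 1 :=
    fun e he => hθh e ((hF'mem e).mp he).1
  have hN₁pos : 0 < N₁ := by
    rw [hN₁def, hfxdef]; exact CFNaux_indicator_sum_pos hθF _ τ
  have hN₂pos : 0 < N₂ := by
    rw [hN₂def, hfydef]; exact CFNaux_indicator_sum_pos hθF' _ τ
  have htop : 0 < N₁ * N₂ + M₁ * M₂ * θh s(x, y) := by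
    have h1 := hL (θh s(x, y))
    rw [Function.update_eq_self] at h1
    have h2 : 0 < CFN.cfnProb Finset.univ G.edgeFinset θh
        {η : V → Bool | ∀ z ∈ CFN.leaves G, η z = τ z} := by
      unfold CFN.cfnProb
      exact mul_pos (by positivity) (CFNaux_indicator_sum_pos hθh _ τ)
    rw [h1] at h2
    exact (div_pos_iff.mp h2).resolve_right (fun h => absurd h.2 (not_lt.mpr h2n.le)) |>.1
  -- magnetizations
  have hZx : CFN.descMag G x y θh τ = M₁ / N₁ := by
    unfold CFN.descMag
    rw [CFNaux_magnetization_eq, ← hfxdef, ← hgxdef, ← hN₁def, ← hM₁def]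
  have hZy : CFN.descMag G y x θh τ = M₂ / N₂ := by
    unfold CFN.descMag
    rw [CFNaux_magnetization_eq, ← hfydef, ← hgydef, ← hN₂def, ← hM₂def]
  -- the derivative
  have hfeq : (fun t : ℝ => Real.log (CFN.cfnProb Finset.univ G.edgeFinset
      (Function.update θh s(x, y) t) {η : V → Bool | ∀ z ∈ CFN.leaves G, η z = τ z}))
      = fun t : ℝ => Real.log ((N₁ * N₂ + M₁ * M₂ * t) / 2 ^ Fintype.card V) :=
    funext fun t => by rw [hL t]
  rw [hfeq, hZx, hZy]
  have hne : (N₁ * N₂ + M₁ * M₂ * θh s(x, y)) / (2 : ℝ) ^ Fintype.card V ≠ 0 :=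
    ne_of_gt (div_pos htop h2n)
  have hderiv : HasDerivAt (fun t : ℝ => (N₁ * N₂ + M₁ * M₂ * t) / 2 ^ Fintype.card V)
      (M₁ * M₂ / 2 ^ Fintype.card V) (θh s(x, y)) := by
    have h1 : HasDerivAt (fun t : ℝ => N₁ * N₂ + M₁ * M₂ * t) (M₁ * M₂) (θh s(x, y)) := by
      simpa using ((hasDerivAt_id (θh s(x, y))).const_mul (M₁ * M₂)).const_add (N₁ * N₂)
    exact h1.div_const _
  rw [(hderiv.log hne).deriv]
  have hrw : M₁ * M₂ / 2 ^ Fintype.card V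
      / ((N₁ * N₂ + M₁ * M₂ * θh s(x, y)) / 2 ^ Fintype.card V)
      = M₁ * M₂ / (N₁ * N₂ + M₁ * M₂ * θh s(x, y)) := by
    rw [div_div_div_comm, div_self h2n.ne', div_one]
  rw [hrw]
  rw [div_eq_div_iff htop.ne' (by
    have : 1 + M₁ / N₁ * (M₂ / N₂) * θh s(x, y)
        = (N₁ * N₂ + M₁ * M₂ * θh s(x, y)) / (N₁ * N₂) := by
      field_simp
      try ring
    rw [this]
    exact ne_of_gt (div_pos htop (mul_pos hN₁pos hN₂pos)))]
  field_simp
  try ring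
end
end

section
/- Let e = {x,y} be an edge of T, let T_x be the descendant subtree of x with respect to y and T_y the descendant subtree of y with respect to x, with leaf sets L_x and L_y (so L = L_x ∪ L_y). Fix θ̂ ∈ (−1,1)^E. Then for every leaf configuration τ_L ∈ {±1}^L, the leaf marginal of the CFN measure on T factorizes as P_θ̂(σ̂_L = τ_L) = P_θ̂^{T_x}(σ̂_{L_x} = τ_{L_x}) · P_θ̂^{T_y}(σ̂_{L_y} = τ_{L_y}) · (1 + θ̂_e · Z_x^{θ̂,T_x}(τ_{L_x}) · Z_y^{θ̂,T_y}(τ_{L_y})), where P_θ̂^{T_x} and P_θ̂^{T_y} denote the CFN measures on the subtrees T_x and T_y with the restricted parameters. -/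
open Finset
open scoped Classical

noncomputable section

/-!
Cutting the edge `{x, y}` splits the tree into the descendant subtrees `T_x` and `T_y`, so the
CFN weight factors as `w_x(σ) · w_y(σ) · (1 + θ_e σ_x σ_y)`. Expanding the last factor, the leaf
marginal becomes `E_x[1] E_y[1] + θ_e E_x[σ_x] E_y[σ_y]` (unnormalized expectations with the
leaves pinned), because a sum of products of functions of disjoint sets of spins is a product of
sums. Dividing by `E_x[1] E_y[1] > 0` turns the ratios into the two magnetizations.
-/

section DependsOn

variable {ι : Type*}

lemma DependsOn.mul {α : ι → Type*} {M : Type*} [Mul M] {f g : (Π i, α i) → M} {s : Set ι}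
    (hf : DependsOn f s) (hg : DependsOn g s) : DependsOn (fun x ↦ f x * g x) s :=
  fun _ _ h ↦ congrArg₂ (· * ·) (hf h) (hg h)

theorem Fintype.sum_mul_sum_of_dependsOn_of_dependsOn_compl {β R : Type*} [Fintype ι]
    [DecidableEq ι] [Fintype β] [CommSemiring R] {f g : (ι → β) → R} {s : Set ι}
    [DecidablePred (· ∈ s)] (hf : DependsOn f s) (hg : DependsOn g sᶜ) :
    (∑ σ, f σ) * ∑ σ, g σ = Fintype.card (ι → β) * ∑ σ, f σ * g σ := by
  -- Exchanging the values of `σ` and `σ'` off `s` is a bijection of pairs which preserves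
  -- `f σ * g σ'` and moves both factors onto the first configuration.
  let swap (p : (ι → β) × (ι → β)) : (ι → β) × (ι → β) :=
    (s.piecewise p.1 p.2, s.piecewise p.2 p.1)
  have hswap : Function.Involutive swap := by
    rintro ⟨σ, σ'⟩
    ext i <;> by_cases hi : i ∈ s <;> simp [swap, hi]
  calc (∑ σ, f σ) * ∑ σ, g σ = ∑ p : (ι → β) × (ι → β), f p.1 * g p.2 := by
        rw [Finset.sum_mul_sum, ← Finset.sum_product', Finset.univ_product_univ]
    _ = ∑ p, f (swap p).1 * g (swap p).1 := Finset.sum_congr rfl fun p _ ↦ by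
        congr 1
        · exact hf fun i hi ↦ by simp [swap, hi]
        · exact hg fun i hi ↦ by simp_all [swap]
    _ = ∑ p : (ι → β) × (ι → β), f p.1 * g p.1 :=
        Equiv.sum_comp hswap.toPerm (fun p ↦ f p.1 * g p.1)
    _ = _ := by simp [Fintype.sum_prod_type, Finset.mul_sum]

end DependsOn

namespace SimpleGraph

variable {V : Type*} {G : SimpleGraph V}

lemma Walk.dist_le_length_of_mem_support {u v w : V} (p : G.Walk u v) (hw : w ∈ p.support) :
    G.dist u w ≤ p.length := by
  classical
  exact (dist_le _).trans (p.length_takeUntil_le_length hw)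

theorem IsTree.eq_of_adj_of_dist_eq_add_one (hT : G.IsTree) {x y u v : V}
    (hxy : G.Adj x y) (huv : G.Adj u v) (hu : G.dist u y = G.dist u x + 1)
    (hv : G.dist v x = G.dist v y + 1) : u = x := by
  have hconn := hT.connected
  have : G.dist u y ≤ G.dist u v + G.dist v y := hconn.dist_triangle
  have : G.dist v x ≤ G.dist v u + G.dist u x := hconn.dist_triangle
  have : G.dist u v = 1 := dist_eq_one_iff_adj.mpr huv
  have : G.dist v u = 1 := dist_eq_one_iff_adj.mpr huv.symm
  obtain ⟨p, hp, hpl⟩ := hconn.exists_path_of_dist u x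
  obtain ⟨r, hr, hrl⟩ := hconn.exists_path_of_dist v y
  -- `u - v ⇝ y` is a geodesic, hence the path from `u` to `y`; it passes through `x`, and since
  -- `v ⇝ y` is too short to do so, `x = u`.
  have hq : (Walk.cons huv r).IsPath :=
    (Walk.cons huv r).isPath_of_length_eq_dist (by simp; omega)
  have hyp : y ∉ p.support := fun h ↦ by
    have := p.dist_le_length_of_mem_support h
    omega
  have hxq := hT.isAcyclic.mem_support_of_ne_mem_support_of_adj_of_isPath hq hp hxy.symm hyp
  rcases List.mem_cons.mp (Walk.support_cons huv r ▸ hxq) with hxu | hxr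
  · exact hxu.symm
  · have := r.dist_le_length_of_mem_support hxr
    omega

end SimpleGraph

namespace CFN

section Weights

variable {V : Type*}

lemma edgeSpin_mk (σ : V → Bool) (u v : V) : edgeSpin σ s(u, v) = spin (σ u) * spin (σ v) :=
  rfl

lemma edgeSpin_eq_one_or_neg_one (σ : V → Bool) (e : Sym2 V) :
    edgeSpin σ e = 1 ∨ edgeSpin σ e = -1 := by
  induction e using Sym2.ind with
  | _ u v =>
    rw [edgeSpin_mk]
    cases σ u <;> cases σ v <;> norm_num [spin]

lemma cfnWeight_pos {F : Finset (Sym2 V)} {θ : Sym2 V → ℝ}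
    (hθ : ∀ e ∈ F, θ e ∈ Set.Ioo (-1 : ℝ) 1) (σ : V → Bool) : 0 < cfnWeight F θ σ := by
  refine mul_pos one_half_pos (Finset.prod_pos fun e he ↦ ?_)
  obtain ⟨h₁, h₂⟩ := hθ e he
  rcases edgeSpin_eq_one_or_neg_one σ e with h | h <;> rw [h] <;> linarith

lemma cfnWeight_insert_union [DecidableEq V] {F₁ F₂ : Finset (Sym2 V)} {e : Sym2 V}
    (he : e ∉ F₁ ∪ F₂) (hF : Disjoint F₁ F₂) (θ : Sym2 V → ℝ) (σ : V → Bool) :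
    cfnWeight (insert e (F₁ ∪ F₂)) θ σ =
      cfnWeight F₁ θ σ * cfnWeight F₂ θ σ * (1 + edgeSpin σ e * θ e) := by
  simp only [cfnWeight, Finset.prod_insert he, Finset.prod_union hF]
  ring

lemma dependsOn_cfnWeight {F : Finset (Sym2 V)} {S : Set V} (hF : ∀ e ∈ F, ∀ v ∈ e, v ∈ S)
    (θ : Sym2 V → ℝ) : DependsOn (cfnWeight F θ) S := by
  intro σ σ' h
  refine congrArg (1 / 2 * ·) (Finset.prod_congr rfl fun e he ↦ ?_)
  induction e using Sym2.ind with
  | _ u v =>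
    rw [edgeSpin_mk, edgeSpin_mk, h u (hF _ he u (Sym2.mem_mk_left u v)),
      h v (hF _ he v (Sym2.mem_mk_right u v))]

lemma dependsOn_spin_apply {S : Set V} {u : V} (hu : u ∈ S) :
    DependsOn (fun σ : V → Bool ↦ spin (σ u)) S :=
  fun _ _ h ↦ congrArg spin (h u hu)

lemma dependsOn_indicator_agree (L : Finset V) (τ : V → Bool) :
    DependsOn ({η : V → Bool | ∀ z ∈ L, η z = τ z}.indicator (1 : (V → Bool) → ℝ)) L := by
  intro σ σ' h
  have : (∀ z ∈ L, σ z = τ z) ↔ ∀ z ∈ L, σ' z = τ z :=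
    forall₂_congr fun z hz ↦ by rw [h z hz]
  simp only [Set.indicator_apply, Set.mem_ofPred_eq, Pi.one_apply, this]

lemma setOf_agree_union_eq_inter [DecidableEq V] (L₁ L₂ : Finset V) (τ : V → Bool) :
    {η : V → Bool | ∀ z ∈ L₁ ∪ L₂, η z = τ z} =
      {η | ∀ z ∈ L₁, η z = τ z} ∩ {η | ∀ z ∈ L₂, η z = τ z} :=
  Set.ext fun _ ↦ Finset.forall_mem_union

end Weights

section Expectations

variable {V : Type*} [Fintype V] [DecidableEq V]

lemma cfnExp_indicator_agree_pos {F : Finset (Sym2 V)} {θ : Sym2 V → ℝ}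
    (hθ : ∀ e ∈ F, θ e ∈ Set.Ioo (-1 : ℝ) 1) (L : Finset V) (τ : V → Bool) :
    0 < cfnExp F θ ({η | ∀ z ∈ L, η z = τ z}.indicator 1) := by
  refine Finset.sum_pos' (fun σ _ ↦ mul_nonneg (cfnWeight_pos hθ σ).le ?_)
    ⟨τ, Finset.mem_univ _, by simp [cfnWeight_pos hθ τ]⟩
  exact Set.indicator_nonneg (fun _ _ ↦ zero_le_one) σ

lemma cfnProb_eq_mul_cfnExp (W : Finset V) (F : Finset (Sym2 V)) (θ : Sym2 V → ℝ)
    (A : Set (V → Bool)) :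
    cfnProb W F θ A = 2 ^ W.card / 2 ^ Fintype.card V * cfnExp F θ (A.indicator 1) := by
  refine congrArg _ (Finset.sum_congr rfl fun σ _ ↦ ?_)
  by_cases hσ : σ ∈ A <;> simp [hσ]

lemma magnetization_eq_div (W : Finset V) (F : Finset (Sym2 V)) (θ : Sym2 V → ℝ) (u : V)
    (L : Finset V) (τ : V → Bool) :
    magnetization W F θ u L τ =
      cfnExp F θ (fun η ↦ {η | ∀ z ∈ L, η z = τ z}.indicator 1 η * spin (η u)) /
        cfnExp F θ ({η | ∀ z ∈ L, η z = τ z}.indicator 1) := by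
  rw [magnetization, cfnProb_eq_mul_cfnExp, cfnProb_eq_mul_cfnExp, cfnProb_eq_mul_cfnExp,
    ← mul_sub, mul_div_mul_left _ _ (by positivity)]
  congr 1
  rw [cfnExp, cfnExp, cfnExp, ← Finset.sum_sub_distrib]
  refine Finset.sum_congr rfl fun σ _ ↦ ?_
  by_cases hσ : ∀ z ∈ L, σ z = τ z <;> cases hu : σ u <;> simp [hσ, hu, spin, Set.indicator_apply]

theorem two_pow_mul_cfnExp_insert_union {S : Set V} {F₁ F₂ : Finset (Sym2 V)} {x y : V}
    (hx : x ∈ S) (hy : y ∉ S) (hF₁ : ∀ e ∈ F₁, ∀ v ∈ e, v ∈ S)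
    (hF₂ : ∀ e ∈ F₂, ∀ v ∈ e, v ∉ S) (θ : Sym2 V → ℝ) {f₁ f₂ : (V → Bool) → ℝ}
    (hf₁ : DependsOn f₁ S) (hf₂ : DependsOn f₂ Sᶜ) :
    2 ^ Fintype.card V * cfnExp (insert s(x, y) (F₁ ∪ F₂)) θ (f₁ * f₂) =
      cfnExp F₁ θ f₁ * cfnExp F₂ θ f₂ +
        θ s(x, y) * (cfnExp F₁ θ (fun σ ↦ f₁ σ * spin (σ x)) *
          cfnExp F₂ θ (fun σ ↦ f₂ σ * spin (σ y))) := by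
  have hdisj : Disjoint F₁ F₂ := Finset.disjoint_left.mpr fun e he₁ he₂ ↦ by
    induction e using Sym2.ind with
    | _ u v => exact hF₂ _ he₂ u (Sym2.mem_mk_left u v) (hF₁ _ he₁ u (Sym2.mem_mk_left u v))
  have hxy : s(x, y) ∉ F₁ ∪ F₂ := fun h ↦ (Finset.mem_union.mp h).elim
    (fun h ↦ hy (hF₁ _ h y (Sym2.mem_mk_right x y))) (fun h ↦ hF₂ _ h x (Sym2.mem_mk_left x y) hx)
  have hw₁ := dependsOn_cfnWeight hF₁ θ
  have hw₂ := dependsOn_cfnWeight hF₂ θ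
  have factor {g₁ g₂ : (V → Bool) → ℝ} (hg₁ : DependsOn g₁ S) (hg₂ : DependsOn g₂ Sᶜ) :
      cfnExp F₁ θ g₁ * cfnExp F₂ θ g₂ =
        2 ^ Fintype.card V * ∑ σ, cfnWeight F₁ θ σ * g₁ σ * (cfnWeight F₂ θ σ * g₂ σ) := by
    rw [cfnExp, cfnExp, Fintype.sum_mul_sum_of_dependsOn_of_dependsOn_compl (hw₁.mul hg₁)
      (hw₂.mul hg₂)]
    simp
  rw [factor hf₁ hf₂, factor (hf₁.mul (dependsOn_spin_apply hx))
    (hf₂.mul (dependsOn_spin_apply hy)), cfnExp, Finset.mul_sum, Finset.mul_sum, Finset.mul_sum,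
    Finset.mul_sum, ← Finset.sum_add_distrib]
  refine Finset.sum_congr rfl fun σ _ ↦ ?_
  rw [cfnWeight_insert_union hxy hdisj, edgeSpin_mk, Pi.mul_apply]
  ring

end Expectations

section Descendants

variable {V : Type*} [Fintype V] {G : SimpleGraph V} {x y : V}

lemma mem_descVerts_iff_of_adj (hxy : G.Adj x y) {w : V} :
    w ∈ descVerts G x y ↔ G.dist w y = G.dist w x + 1 := by
  simp [descVerts, SimpleGraph.dist_eq_one_iff_adj.mpr hxy]

lemma self_mem_descVerts (hxy : G.Adj x y) : x ∈ descVerts G x y := by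
  simp [mem_descVerts_iff_of_adj hxy, SimpleGraph.dist_eq_one_iff_adj.mpr hxy]

variable [DecidableEq V]

lemma descVerts_swap (hT : G.IsTree) (hxy : G.Adj x y) :
    descVerts G y x = (descVerts G x y)ᶜ := by
  ext w
  rw [Finset.mem_compl, mem_descVerts_iff_of_adj hxy, mem_descVerts_iff_of_adj hxy.symm]
  have := hT.dist_eq_dist_add_one_of_adj w hxy
  omega

lemma eq_of_adj_of_mem_descVerts_of_notMem (hT : G.IsTree) (hxy : G.Adj x y) {u v : V}
    (huv : G.Adj u v) (hu : u ∈ descVerts G x y) (hv : v ∉ descVerts G x y) :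
    u = x ∧ v = y := by
  rw [← Finset.mem_compl, ← descVerts_swap hT hxy, mem_descVerts_iff_of_adj hxy.symm] at hv
  rw [mem_descVerts_iff_of_adj hxy] at hu
  exact ⟨hT.eq_of_adj_of_dist_eq_add_one hxy huv hu hv,
    hT.eq_of_adj_of_dist_eq_add_one hxy.symm huv.symm hv hu⟩

variable [DecidableRel G.Adj]

lemma mem_descVerts_of_mem_descEdges {e : Sym2 V} (he : e ∈ descEdges G x y) {w : V}
    (hw : w ∈ e) : w ∈ descVerts G x y :=
  (Finset.mem_filter.mp he).2 w hw

lemma edgeFinset_eq_insert_union (hT : G.IsTree) (hxy : G.Adj x y) :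
    G.edgeFinset = insert s(x, y) (descEdges G x y ∪ descEdges G y x) := by
  ext e
  refine ⟨fun he ↦ ?_, fun he ↦ ?_⟩
  · induction e using Sym2.ind with
    | _ u v =>
    have huv : G.Adj u v := SimpleGraph.mem_edgeFinset.mp he
    simp only [Finset.mem_insert, Finset.mem_union, descEdges, Finset.mem_filter,
      Sym2.mem_iff, forall_eq_or_imp, forall_eq, descVerts_swap hT hxy, Finset.mem_compl]
    by_cases hu : u ∈ descVerts G x y <;> by_cases hv : v ∈ descVerts G x y
    · exact Or.inr (Or.inl ⟨he, hu, hv⟩)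
    · obtain ⟨rfl, rfl⟩ := eq_of_adj_of_mem_descVerts_of_notMem hT hxy huv hu hv
      exact Or.inl rfl
    · obtain ⟨rfl, rfl⟩ := eq_of_adj_of_mem_descVerts_of_notMem hT hxy huv.symm hv hu
      exact Or.inl Sym2.eq_swap
    · exact Or.inr (Or.inr ⟨he, hu, hv⟩)
  · rcases Finset.mem_insert.mp he with rfl | he
    · exact SimpleGraph.mem_edgeFinset.mpr hxy
    · rcases Finset.mem_union.mp he with he | he <;> exact (Finset.mem_filter.mp he).1

lemma leaves_eq_union (hT : G.IsTree) (hxy : G.Adj x y) :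
    leaves G = descLeaves G x y ∪ descLeaves G y x := by
  rw [leaves, descLeaves, descLeaves, ← Finset.filter_union, descVerts_swap hT hxy,
    Finset.union_compl]

theorem two_pow_mul_cfnExp_leaves (hT : G.IsTree) (hxy : G.Adj x y) (θ : Sym2 V → ℝ)
    (τ : V → Bool) :
    2 ^ Fintype.card V * cfnExp G.edgeFinset θ ({η | ∀ z ∈ leaves G, η z = τ z}.indicator 1) =
      cfnExp (descEdges G x y) θ ({η | ∀ z ∈ descLeaves G x y, η z = τ z}.indicator 1) *
          cfnExp (descEdges G y x) θ ({η | ∀ z ∈ descLeaves G y x, η z = τ z}.indicator 1) +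
        θ s(x, y) *
          (cfnExp (descEdges G x y) θ
              (fun η ↦ {η | ∀ z ∈ descLeaves G x y, η z = τ z}.indicator 1 η * spin (η x)) *
            cfnExp (descEdges G y x) θ
              (fun η ↦ {η | ∀ z ∈ descLeaves G y x, η z = τ z}.indicator 1 η * spin (η y))) := by
  have hS : (descVerts G y x : Set V) = (descVerts G x y : Set V)ᶜ := by
    rw [descVerts_swap hT hxy, Finset.coe_compl]
  rw [edgeFinset_eq_insert_union hT hxy, leaves_eq_union hT hxy, setOf_agree_union_eq_inter,
    Set.inter_indicator_one]
  refine two_pow_mul_cfnExp_insert_union (self_mem_descVerts hxy) ?_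
    (fun _ he _ hv ↦ mem_descVerts_of_mem_descEdges he hv) ?_ θ
    ((dependsOn_indicator_agree _ τ).mono (Finset.coe_subset.mpr (Finset.filter_subset _ _)))
    ((dependsOn_indicator_agree _ τ).mono (hS ▸ Finset.coe_subset.mpr (Finset.filter_subset _ _)))
  · rw [Finset.mem_coe, ← Finset.mem_compl, ← descVerts_swap hT hxy]
    exact self_mem_descVerts hxy.symm
  · intro _ he _ hv
    rw [Finset.mem_coe, ← Finset.mem_compl, ← descVerts_swap hT hxy]
    exact mem_descVerts_of_mem_descEdges he hv

end Descendants

end CFN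

theorem leaf_marginal_factorization_general
    {V : Type*} [Fintype V] [DecidableEq V] (G : SimpleGraph V) [DecidableRel G.Adj]
    (hT : G.IsTree)
    (x y : V) (hxy : G.Adj x y)
    (θh : Sym2 V → ℝ) (hθh : ∀ e ∈ G.edgeFinset, θh e ∈ Set.Ioo (-1 : ℝ) 1)
    (τ : V → Bool) :
    CFN.cfnProb Finset.univ G.edgeFinset θh {η | ∀ z ∈ CFN.leaves G, η z = τ z} =
      CFN.cfnProb (CFN.descVerts G x y) (CFN.descEdges G x y) θh
          {η | ∀ z ∈ CFN.descLeaves G x y, η z = τ z} *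
        CFN.cfnProb (CFN.descVerts G y x) (CFN.descEdges G y x) θh
          {η | ∀ z ∈ CFN.descLeaves G y x, η z = τ z} *
        (1 + θh s(x, y) * CFN.descMag G x y θh τ * CFN.descMag G y x θh τ) := by
  have hpos (u v : V) : 0 < CFN.cfnExp (CFN.descEdges G u v) θh
      ({η | ∀ z ∈ CFN.descLeaves G u v, η z = τ z}.indicator 1) :=
    CFN.cfnExp_indicator_agree_pos (fun e he ↦ hθh e (Finset.filter_subset _ _ he)) _ _
  have hcard : (2 : ℝ) ^ (CFN.descVerts G x y).card * 2 ^ (CFN.descVerts G y x).card =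
      2 ^ Fintype.card V := by
    rw [← pow_add, CFN.descVerts_swap hT hxy, Finset.card_add_card_compl]
  have hsplit := CFN.two_pow_mul_cfnExp_leaves hT hxy θh τ
  have := hpos x y
  have := hpos y x
  simp only [CFN.cfnProb_eq_mul_cfnExp, CFN.descMag, CFN.magnetization_eq_div, Finset.card_univ]
  field_simp
  rw [hcard]
  linear_combination 2 ^ Fintype.card V * hsplit

/-- **Lemma (factorization of the leaf marginal across an edge).**
For an edge `e = {x,y}` of the tree and any leaf configuration `τ`:
`P_θ̂(σ_L = τ_L) = P_θ̂^{T_x}(σ_{L_x} = τ_{L_x}) · P_θ̂^{T_y}(σ_{L_y} = τ_{L_y}) ·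
(1 + θ̂_e · Z_x^{θ̂,T_x}(τ_{L_x}) · Z_y^{θ̂,T_y}(τ_{L_y}))`. -/
theorem leaf_marginal_factorization
    {V : Type*} [Fintype V] [DecidableEq V] (G : SimpleGraph V) [DecidableRel G.Adj]
    (hT : G.IsTree) (hbin : ∀ w : V, G.degree w = 1 ∨ G.degree w = 3)
    (x y : V) (hxy : G.Adj x y)
    (θh : Sym2 V → ℝ) (hθh : ∀ e ∈ G.edgeFinset, θh e ∈ Set.Ioo (-1 : ℝ) 1)
    (τ : V → Bool) :
    CFN.cfnProb Finset.univ G.edgeFinset θh {η | ∀ z ∈ CFN.leaves G, η z = τ z} =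
      CFN.cfnProb (CFN.descVerts G x y) (CFN.descEdges G x y) θh
          {η | ∀ z ∈ CFN.descLeaves G x y, η z = τ z} *
        CFN.cfnProb (CFN.descVerts G y x) (CFN.descEdges G y x) θh
          {η | ∀ z ∈ CFN.descLeaves G y x, η z = τ z} *
        (1 + θh s(x, y) * CFN.descMag G x y θh τ * CFN.descMag G y x θh τ) :=
  leaf_marginal_factorization_general G hT x y hxy θh hθh τ
end
end

section
/- Fix ε ∈ [0, 1/2). If s and t are real numbers with 1 − ε ≤ s ≤ 1 and 1 − ε ≤ t ≤ 1, then q(s,t) ≥ 1 − (4/5)·ε² and q(−s,−t) ≤ −1 + (4/5)·ε². -/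
/-- `q(s,t) := (s + t)/(1 + s·t)`. -/
noncomputable def q (s t : ℝ) : ℝ := (s + t) / (1 + s * t)

/-- **Claim (two strong agreeing inputs).** For `ε ∈ [0, 1/2)` and
`1 − ε ≤ s, t ≤ 1`: `q(s,t) ≥ 1 − (4/5)ε²` and `q(−s,−t) ≤ −1 + (4/5)ε²`. -/
theorem q_two_strong_agreeing_inputs (ε : ℝ) (hε : ε ∈ Set.Ico (0 : ℝ) (1 / 2))
    (s t : ℝ) (hs : 1 - ε ≤ s) (hs' : s ≤ 1) (ht : 1 - ε ≤ t) (ht' : t ≤ 1) :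
    1 - 4 / 5 * ε ^ 2 ≤ q s t ∧ q (-s) (-t) ≤ -1 + 4 / 5 * ε ^ 2 := by
  obtain ⟨hε0, hε2⟩ := hε
  have hst : (5:ℝ)/4 ≤ 1 + s * t := by nlinarith
  have key : (1 + s * t) * (1 - 4/5 * ε^2) ≤ s + t := by
    nlinarith [mul_nonneg (sub_nonneg.2 hs) (sub_nonneg.2 ht),
      mul_nonneg (sq_nonneg ε) (by linarith : (0:ℝ) ≤ s * t - 1/4),
      sq_nonneg (s - t), mul_nonneg hε0 hε0]
  have hpos : (0:ℝ) < 1 + s * t := by linarith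
  have h1 : 1 - 4/5 * ε^2 ≤ q s t := by
    rw [q, le_div_iff₀ hpos]; linarith [key]
  refine ⟨h1, ?_⟩
  have : q (-s) (-t) = -q s t := by
    rw [q, q]; ring_nf
  rw [this]; linarith
end

section
/- Fix real numbers 0 < a < A and δ > 0 with A·δ < 1. If s and t are real numbers with s, t ∈ [1 − A·δ, 1 − a·δ], then −1 + a/A ≤ q(s, −t) ≤ 1 − a/A. -/
/-- **Claim (two strong disagreeing inputs).** For `0 < a < A`, `δ > 0` with `A·δ < 1`,
and `s, t ∈ [1 − Aδ, 1 − aδ]`: `−1 + a/A ≤ q(s, −t) ≤ 1 − a/A`. -/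
theorem q_two_strong_disagreeing_inputs (a A δ : ℝ) (ha : 0 < a) (haA : a < A)
    (hδ : 0 < δ) (hAδ : A * δ < 1)
    (s t : ℝ) (hs : s ∈ Set.Icc (1 - A * δ) (1 - a * δ))
    (ht : t ∈ Set.Icc (1 - A * δ) (1 - a * δ)) :
    -1 + a / A ≤ q s (-t) ∧ q s (-t) ≤ 1 - a / A := by
  obtain ⟨hs1, hs2⟩ := hs
  obtain ⟨ht1, ht2⟩ := ht
  have hA : 0 < A := ha.trans haA
  have haA' : (0:ℝ) ≤ A - a := by linarith
  have haδ : a * δ < 1 := lt_of_le_of_lt (by nlinarith) hAδ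
  have hd : 0 < 1 + s * (-t) := by nlinarith [mul_pos (mul_pos ha hδ) (sub_pos.mpr haδ)]
  have key1 : A * (s - t) ≤ (A - a) * (1 - s * t) := by
    have h0 : (0:ℝ) ≤ (A - a) * (a * δ) * (1 - A * δ) :=
      mul_nonneg (mul_nonneg haA' (by positivity)) (by linarith)
    have h1 : (0:ℝ) ≤ ((1 - a * δ) - s) * (t - (1 - A * δ)) * (A - a) :=
      mul_nonneg (mul_nonneg (by linarith) (by linarith)) haA'
    have h2 : (0:ℝ) ≤ (t - (1 - A * δ)) * (a + (A - a) * (a * δ)) :=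
      mul_nonneg (by linarith) (by positivity)
    have h3 : (0:ℝ) ≤ ((1 - a * δ) - s) * ((A - a) * (1 - A * δ) + A) :=
      mul_nonneg (by linarith) (by nlinarith)
    nlinarith [h0, h1, h2, h3]
  have key2 : A * (t - s) ≤ (A - a) * (1 - s * t) := by
    have h0 : (0:ℝ) ≤ (A - a) * (a * δ) * (1 - A * δ) :=
      mul_nonneg (mul_nonneg haA' (by positivity)) (by linarith)
    have h1 : (0:ℝ) ≤ ((1 - a * δ) - t) * (s - (1 - A * δ)) * (A - a) :=
      mul_nonneg (mul_nonneg (by linarith) (by linarith)) haA'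
    have h2 : (0:ℝ) ≤ (s - (1 - A * δ)) * (a + (A - a) * (a * δ)) :=
      mul_nonneg (by linarith) (by positivity)
    have h3 : (0:ℝ) ≤ ((1 - a * δ) - t) * ((A - a) * (1 - A * δ) + A) :=
      mul_nonneg (by linarith) (by nlinarith)
    nlinarith [h0, h1, h2, h3]
  have e1 : 1 - a / A = (A - a) / A := by field_simp
  have e2 : -1 + a / A = (a - A) / A := by field_simp; ring
  unfold q
  constructor
  · rw [le_div_iff₀ hd, e2, div_mul_eq_mul_div, div_le_iff₀ hA]
    nlinarith [key2]
  · rw [div_le_iff₀ hd, e1, div_mul_eq_mul_div, le_div_iff₀ hA]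
    nlinarith [key1]
end

section
/- Fix real numbers 0 < a < A and δ > 0 with A·δ < 1. If t ∈ [1 − A·δ, 1 − a·δ] and s is a real number with |s| ≤ 1 − a·δ, then q(s,t) ≥ −1 + a/A. -/
/-- **Claim (one strong input, one bounded input).** For `0 < a < A`, `δ > 0` with
`A·δ < 1`, `t ∈ [1 − Aδ, 1 − aδ]` and `|s| ≤ 1 − aδ`: `q(s,t) ≥ −1 + a/A`. -/
theorem q_one_strong_one_bounded_input (a A δ : ℝ) (ha : 0 < a) (haA : a < A)
    (hδ : 0 < δ) (hAδ : A * δ < 1)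
    (s t : ℝ) (ht : t ∈ Set.Icc (1 - A * δ) (1 - a * δ)) (hs : |s| ≤ 1 - a * δ) :
    -1 + a / A ≤ q s t := by
  obtain ⟨ht1, ht2⟩ := ht
  have hA : 0 < A := ha.trans haA
  have hs1 : -(1 - a * δ) ≤ s := neg_le_of_abs_le hs
  have hs2 : s ≤ 1 - a * δ := le_of_abs_le hs
  have haδ : a * δ < 1 := lt_of_le_of_lt (by nlinarith) hAδ
  have htpos : 0 < t := by linarith
  have hkey : 0 ≤ (s + (1 - a * δ)) * t := by
    apply mul_nonneg (by linarith) htpos.le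
  have h1 : 0 < 1 + s * t := by nlinarith [mul_pos (mul_pos ha hδ) htpos]
  have h2 : -1 + a / A = (a - A) / A := by field_simp; ring
  rw [q, le_div_iff₀ h1, h2, div_mul_eq_mul_div, div_le_iff₀ hA]
  nlinarith [mul_nonneg (show (0:ℝ) ≤ s + (1 - a * δ) by linarith)
      (show (0:ℝ) ≤ A + (A - a) * t by nlinarith),
    mul_nonneg (show (0:ℝ) ≤ t - (1 - A * δ) by linarith)
      (show (0:ℝ) ≤ A - (1 - a * δ) * (A - a) by nlinarith),
    mul_nonneg (mul_nonneg (mul_nonneg hδ.le (sub_pos.mpr haA).le) ha.le)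
      (sub_pos.mpr hAδ).le]
end

section
/- Suppose 0 < a < A, 0 < B, and δ ∈ [0,1] are real numbers such that a < A/2, δ < a/2, and (2A²/a + B)·δ < 1/2. If s₁ ∈ [−1 + a·δ, 1], s₂, s₃, s₄ ∈ [1 − A·δ, 1], and t₁, t₂ ∈ [1 − B·δ, 1], then t₂ · q( t₁ · q(s₁, s₂), s₃ ) ≥ 1 − (2A²/a + B)·δ. -/
set_option maxHeartbeats 800000 in
/-- **Claim (corruption at distance 3: intermediate bound).** Under the stated
hypotheses, `t₂ · q(t₁ · q(s₁, s₂), s₃) ≥ 1 − (2A²/a + B)·δ`. -/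
theorem q_corruption_distance_three_intermediate
    (a A B δ : ℝ) (ha : 0 < a) (haA : a < A) (hB : 0 < B)
    (hδ0 : 0 ≤ δ) (hδ1 : δ ≤ 1) (haA2 : a < A / 2) (hδa : δ < a / 2)
    (hsmall : (2 * A ^ 2 / a + B) * δ < 1 / 2)
    (s₁ s₂ s₃ s₄ t₁ t₂ : ℝ)
    (hs₁ : s₁ ∈ Set.Icc (-1 + a * δ) 1)
    (hs₂ : s₂ ∈ Set.Icc (1 - A * δ) 1) (hs₃ : s₃ ∈ Set.Icc (1 - A * δ) 1)
    (hs₄ : s₄ ∈ Set.Icc (1 - A * δ) 1)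
    (ht₁ : t₁ ∈ Set.Icc (1 - B * δ) 1) (ht₂ : t₂ ∈ Set.Icc (1 - B * δ) 1) :
    1 - (2 * A ^ 2 / a + B) * δ ≤ t₂ * q (t₁ * q s₁ s₂) s₃ := by
  obtain ⟨hs₁l, hs₁u⟩ := hs₁
  obtain ⟨hs₂l, hs₂u⟩ := hs₂
  obtain ⟨hs₃l, hs₃u⟩ := hs₃
  obtain ⟨ht₁l, ht₁u⟩ := ht₁
  obtain ⟨ht₂l, ht₂u⟩ := ht₂
  have hAA : 0 < A := lt_trans ha haA
  rcases eq_or_lt_of_le hδ0 with hδ | hδ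
  · -- δ = 0
    subst hδ
    have hs2 : s₂ = 1 := le_antisymm hs₂u (by linarith)
    have hs3 : s₃ = 1 := le_antisymm hs₃u (by linarith)
    have ht1 : t₁ = 1 := le_antisymm ht₁u (by linarith)
    have ht2 : t₂ = 1 := le_antisymm ht₂u (by linarith)
    subst hs2; subst hs3; subst ht1; subst ht2
    rcases eq_or_ne s₁ (-1) with h | h
    · subst h; norm_num [q]
    · have h1 : (1 : ℝ) + s₁ ≠ 0 := fun hc => h (by linarith)
      have hq1 : q s₁ 1 = 1 := by
        simp only [q, mul_one]
        rw [show s₁ + 1 = 1 + s₁ from add_comm _ _]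
        exact div_self h1
      rw [hq1]
      norm_num [q]
  · -- δ > 0
    have hBδ0 : 0 ≤ B * δ := mul_nonneg hB.le hδ0
    have hK0 : 0 < 2 * A ^ 2 / a := by positivity
    have hKδ : 2 * A ^ 2 / a * δ < 1 / 2 := by linarith
    have hKa : 2 * A ^ 2 / a * a = 2 * A ^ 2 := div_mul_cancel₀ _ ha.ne'
    have hKδa : 2 * A ^ 2 / a * δ * a = 2 * A ^ 2 * δ := by
      rw [mul_right_comm, hKa]
    have h2 : 2 * A ^ 2 * δ < a / 2 := by
      linarith [mul_lt_mul_of_pos_right hKδ ha, hKδa]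
    have hAδ0 : 0 ≤ A * δ := mul_nonneg hAA.le hδ0
    have hAδ : A * δ ≤ 1 / 4 := by
      have h3 : a * (A * δ) ≤ A * (A * δ) := mul_le_mul_of_nonneg_right haA.le hAδ0
      have h4 : a * (A * δ) < a * (1 / 4) := by nlinarith [h3, h2]
      exact le_of_lt ((mul_lt_mul_iff_right₀ ha).1 h4)
    have hs₂34 : (3:ℝ)/4 ≤ s₂ := by linarith
    have hs₃34 : (3:ℝ)/4 ≤ s₃ := by linarith
    have hBδ : B * δ < 1 / 2 := by linarith [mul_pos hK0 hδ]
    have ht₁pos : 0 < t₁ := by linarith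
    have h1s₁ : 0 < 1 + s₁ := by linarith [mul_pos ha hδ]
    have h1s₂ : 0 < 1 + s₂ := by linarith
    have hs₂pos : (0:ℝ) < s₂ := by linarith
    have hD₁ : 0 < 1 + s₁ * s₂ := by linarith [mul_pos hs₂pos h1s₁]
    simp only [q]
    set u : ℝ := (s₁ + s₂) / (1 + s₁ * s₂) with hu
    have hu_le : u ≤ 1 := by
      rw [hu, div_le_one hD₁]
      linarith [mul_nonneg (sub_nonneg.2 hs₁u) (sub_nonneg.2 hs₂u)]
    have hu_gt : -1 < u := by
      rw [hu, lt_div_iff₀ hD₁]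
      linarith [mul_pos h1s₁ h1s₂]
    set v : ℝ := t₁ * u with hv
    have hv_le : v ≤ 1 := by
      rcases le_or_gt 0 u with h | h
      · have := mul_nonneg (sub_nonneg.2 ht₁u) h
        simp only [hv]; linarith [this, hu_le]
      · have := mul_pos ht₁pos (neg_pos.2 h)
        simp only [hv]; linarith [this]
    have hv_gt : -1 < v := by
      rcases le_or_gt 0 u with h | h
      · have := mul_nonneg ht₁pos.le h
        simp only [hv]; linarith [this]
      · have := mul_nonneg (sub_nonneg.2 ht₁u) (le_of_lt (neg_pos.2 h))
        simp only [hv]; linarith [this, hu_gt]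
    have h1v : 0 < 1 + v := by linarith
    have hKv : 7 * a * (1 - v) ≤ 8 * A * (1 + v) := by
      rcases le_or_gt 0 u with h | h
      · have hv0 : 0 ≤ v := mul_nonneg ht₁pos.le h
        linarith [mul_nonneg ha.le hv0, mul_nonneg hAA.le hv0]
      · have hvu : u ≤ v := by
          have := mul_nonneg (sub_nonneg.2 ht₁u) (le_of_lt (neg_pos.2 h))
          simp only [hv]; linarith [this]
        have e1 : 1 - u = (1 - s₁) * (1 - s₂) / (1 + s₁ * s₂) := by
          rw [hu]; field_simp; ring
        have e2 : 1 + u = (1 + s₁) * (1 + s₂) / (1 + s₁ * s₂) := by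
          rw [hu]; field_simp; ring
        have hcore : 7 * a * ((1 - s₁) * (1 - s₂)) ≤ 8 * A * ((1 + s₁) * (1 + s₂)) := by
          have p1 : (1 - s₁) * (1 - s₂) ≤ 2 * (A * δ) :=
            mul_le_mul (by linarith) (by linarith) (by linarith) (by norm_num)
          have p2 : a * δ * (7 / 4) ≤ (1 + s₁) * (1 + s₂) :=
            mul_le_mul (by linarith) (by linarith) (by linarith) (by linarith)
          linarith [mul_le_mul_of_nonneg_left p1 (by positivity : (0:ℝ) ≤ 7 * a),
            mul_le_mul_of_nonneg_left p2 (by positivity : (0:ℝ) ≤ 8 * A)]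
        have hKu : 7 * a * (1 - u) ≤ 8 * A * (1 + u) := by
          rw [e1, e2, ← mul_div_assoc, ← mul_div_assoc, div_le_div_iff₀ hD₁ hD₁]
          linarith [mul_le_mul_of_nonneg_right hcore hD₁.le]
        linarith [mul_nonneg ha.le (sub_nonneg.2 hvu),
          mul_nonneg hAA.le (sub_nonneg.2 hvu), hKu]
    have hD₂' : s₃ * (1 + v) ≤ 1 + v * s₃ := by linarith [hs₃u]
    have hs₃pos : (0:ℝ) < s₃ := by linarith
    have hD₂pos : 0 < 1 + v * s₃ := lt_of_lt_of_le (mul_pos hs₃pos h1v) hD₂'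
    have hD₂ge : 3 / 4 * (1 + v) ≤ 1 + v * s₃ := by
      linarith [mul_le_mul_of_nonneg_right hs₃34 h1v.le, hD₂']
    set w : ℝ := (v + s₃) / (1 + v * s₃) with hw
    have hcore2 : a * ((1 - v) * (1 - s₃)) ≤ 2 * A ^ 2 * δ * (1 + v * s₃) := by
      have q1 : a * (1 - v) * (1 - s₃) ≤ a * (1 - v) * (A * δ) :=
        mul_le_mul_of_nonneg_left (by linarith)
          (mul_nonneg ha.le (by linarith))
      have q2 : 7 * a * (1 - v) * (A * δ) ≤ 8 * A * (1 + v) * (A * δ) :=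
        mul_le_mul_of_nonneg_right hKv (by positivity)
      have q3 : 2 * A ^ 2 * δ * (3 / 4 * (1 + v)) ≤ 2 * A ^ 2 * δ * (1 + v * s₃) :=
        mul_le_mul_of_nonneg_left hD₂ge (by positivity)
      have q4 : (0:ℝ) ≤ A ^ 2 * δ * (1 + v) := by positivity
      linarith [q1, q2, q3, q4]
    have hfrac : (1 - v) * (1 - s₃) ≤ 2 * A ^ 2 / a * δ * (1 + v * s₃) := by
      rw [div_mul_eq_mul_div, div_mul_eq_mul_div, le_div_iff₀ ha]
      linarith [hcore2]
    have hw_lb : 1 - 2 * A ^ 2 / a * δ ≤ w := by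
      rw [hw, le_div_iff₀ hD₂pos]
      linarith [hfrac]
    have hw_le1 : w ≤ 1 := by
      rw [hw, div_le_one hD₂pos]
      linarith [mul_nonneg (sub_nonneg.2 hv_le) (sub_nonneg.2 hs₃u)]
    have hw_nonneg : 0 ≤ w := by linarith
    have h1 : (1 - t₂) * w ≤ B * δ * w :=
      mul_le_mul_of_nonneg_right (by linarith) hw_nonneg
    have h2' : B * δ * w ≤ B * δ * 1 := mul_le_mul_of_nonneg_left hw_le1 hBδ0
    linarith [h1, h2', hw_lb]
end

section
/- Suppose 0 < a < A, 0 < B, and δ ∈ [0,1] are real numbers such that a < A/2, δ < a/2, and (2A²/a + B)·δ < 1/2. If s₁ ∈ [−1 + a·δ, 1], s₂, s₃, s₄ ∈ [1 − A·δ, 1], and t₁, t₂ ∈ [1 − B·δ, 1], then q( t₂ · q( t₁ · q(s₁, s₂), s₃ ), s₄ ) ≥ 1 − (4/5)·(2A²/a + B)²·δ². -/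
lemma one_sub_q (x y : ℝ) (h : 1 + x * y ≠ 0) :
    1 - q x y = (1 - x) * (1 - y) / (1 + x * y) := by
  unfold q; field_simp; ring

lemma one_add_q (x y : ℝ) (h : 1 + x * y ≠ 0) :
    1 + q x y = (1 + x) * (1 + y) / (1 + x * y) := by
  unfold q; field_simp; ring

set_option maxHeartbeats 1600000 in
/-- **Claim (corruption at distance 3).** Under the stated hypotheses,
`q(t₂ · q(t₁ · q(s₁, s₂), s₃), s₄) ≥ 1 − (4/5)·(2A²/a + B)²·δ²`. -/
theorem q_corruption_distance_three
    (a A B δ : ℝ) (ha : 0 < a) (haA : a < A) (hB : 0 < B)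
    (hδ0 : 0 ≤ δ) (hδ1 : δ ≤ 1) (haA2 : a < A / 2) (hδa : δ < a / 2)
    (hsmall : (2 * A ^ 2 / a + B) * δ < 1 / 2)
    (s₁ s₂ s₃ s₄ t₁ t₂ : ℝ)
    (hs₁ : s₁ ∈ Set.Icc (-1 + a * δ) 1)
    (hs₂ : s₂ ∈ Set.Icc (1 - A * δ) 1) (hs₃ : s₃ ∈ Set.Icc (1 - A * δ) 1)
    (hs₄ : s₄ ∈ Set.Icc (1 - A * δ) 1)
    (ht₁ : t₁ ∈ Set.Icc (1 - B * δ) 1) (ht₂ : t₂ ∈ Set.Icc (1 - B * δ) 1) :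
    1 - 4 / 5 * (2 * A ^ 2 / a + B) ^ 2 * δ ^ 2 ≤ q (t₂ * q (t₁ * q s₁ s₂) s₃) s₄ := by
  obtain ⟨hs₁l, hs₁u⟩ := hs₁
  obtain ⟨hs₂l, hs₂u⟩ := hs₂
  obtain ⟨hs₃l, hs₃u⟩ := hs₃
  obtain ⟨hs₄l, hs₄u⟩ := hs₄
  obtain ⟨ht₁l, ht₁u⟩ := ht₁
  obtain ⟨ht₂l, ht₂u⟩ := ht₂
  have hA : 0 < A := lt_trans ha haA
  rcases eq_or_lt_of_le hδ0 with hδz | hδpos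
  · -- δ = 0 case
    have hδ : δ = 0 := hδz.symm
    subst hδ
    have h2 : s₂ = 1 := le_antisymm hs₂u (by linarith)
    have h3 : s₃ = 1 := le_antisymm hs₃u (by linarith)
    have h4 : s₄ = 1 := le_antisymm hs₄u (by linarith)
    have h5 : t₁ = 1 := le_antisymm ht₁u (by linarith)
    have h6 : t₂ = 1 := le_antisymm ht₂u (by linarith)
    subst h2 h3 h4 h5 h6
    by_cases hone : s₁ = -1
    · subst hone
      norm_num [q]
    · have h1 : 1 + s₁ ≠ 0 := fun h => hone (by linarith)
      have hq1 : q s₁ 1 = 1 := by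
        unfold q
        rw [mul_one, div_eq_one_iff_eq h1]
        ring
      rw [hq1]
      norm_num [q]
  -- main case δ > 0
  obtain ⟨C, hC⟩ : ∃ C : ℝ, C = 2 * A ^ 2 / a + B := ⟨_, rfl⟩
  rw [← hC] at hsmall ⊢
  have hCpos : 0 < C := by rw [hC]; positivity
  have hCδeq : C * δ = (2 * A ^ 2 / a) * δ + B * δ := by rw [hC]; ring
  have h2Aa0 : 0 ≤ (2 * A ^ 2 / a) * δ := by positivity
  have hBδ0 : 0 ≤ B * δ := by positivity
  have hCδ : C * δ < 1 / 2 := hsmall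
  have hCδ0 : 0 ≤ C * δ := by positivity
  have hBδ : B * δ < 1 / 2 := by linarith
  have h4A : 4 * A ≤ 2 * A ^ 2 / a := by
    rw [le_div_iff₀ ha]
    have hkey := mul_pos hA (show (0:ℝ) < A - 2*a by linarith)
    nlinarith [hkey]
  have h4Aδ : 4 * A * δ ≤ (2 * A ^ 2 / a) * δ := mul_le_mul_of_nonneg_right h4A hδ0
  have hAδ : A * δ < 1 / 8 := by linarith
  have hAδ0 : 0 < A * δ := by positivity
  have haδ : 0 < a * δ := by positivity
  have hs₂7 : (7:ℝ)/8 ≤ s₂ := by linarith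
  have hs₃7 : (7:ℝ)/8 ≤ s₃ := by linarith
  have hs₄7 : (7:ℝ)/8 ≤ s₄ := by linarith
  have ht₁0 : (0:ℝ) ≤ t₁ := by linarith
  have ht₂0 : (0:ℝ) ≤ t₂ := by linarith
  have hp0 : a * δ ≤ 1 + s₁ := by linarith
  have hp0' : 0 < 1 + s₁ := lt_of_lt_of_le haδ hp0
  obtain ⟨R, hR⟩ : ∃ R : ℝ, R = 16 * A / (15 * a) := ⟨_, rfl⟩
  have hR2 : (2:ℝ) ≤ R := by
    rw [hR, le_div_iff₀ (by positivity)]; linarith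
  have hR0 : (0:ℝ) ≤ R := by linarith
  -- Step 1 : u = q s₁ s₂
  obtain ⟨u, hu⟩ : ∃ u : ℝ, u = q s₁ s₂ := ⟨_, rfl⟩
  have hD₁ : 0 < 1 + s₁ * s₂ := by
    have h1 : 1 + s₁ * s₂ = s₂ * (1 + s₁) + (1 - s₂) := by ring
    have h2 : (7:ℝ)/8 * (1 + s₁) ≤ s₂ * (1 + s₁) :=
      mul_le_mul_of_nonneg_right hs₂7 (le_of_lt hp0')
    linarith [h2, hs₂u, hp0']
  have h1u : 1 - u = (1 - s₁) * (1 - s₂) / (1 + s₁ * s₂) := by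
    rw [hu]; exact one_sub_q _ _ (ne_of_gt hD₁)
  have h2u : 1 + u = (1 + s₁) * (1 + s₂) / (1 + s₁ * s₂) := by
    rw [hu]; exact one_add_q _ _ (ne_of_gt hD₁)
  have hu1 : u ≤ 1 := by
    have : 0 ≤ 1 - u := by
      rw [h1u]
      apply div_nonneg _ (le_of_lt hD₁)
      apply mul_nonneg <;> linarith
    linarith
  have hu2 : 0 < 1 + u := by
    rw [h2u]
    exact div_pos (mul_pos hp0' (by linarith)) hD₁
  have hfu : 1 - u ≤ R * (1 + u) := by
    rw [h1u, h2u, ← mul_div_assoc]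
    apply div_le_div₀ (by positivity) _ hD₁ le_rfl
    rw [hR, div_mul_eq_mul_div, le_div_iff₀ (by positivity : (0:ℝ) < 15 * a)]
    have e1 : (1 - s₁) * (1 - s₂) ≤ 2 * (A * δ) :=
      mul_le_mul (by linarith) (by linarith) (by linarith) (by norm_num)
    have e2 : (a * δ) * (15/8) ≤ (1 + s₁) * (1 + s₂) :=
      mul_le_mul hp0 (by linarith) (by norm_num) (by linarith)
    have e1' := mul_le_mul_of_nonneg_right e1 (show (0:ℝ) ≤ 15 * a by positivity)
    have e2' := mul_le_mul_of_nonneg_left e2 (show (0:ℝ) ≤ 16 * A by positivity)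
    linarith [e1', e2']
  -- Step 2 : x = t₁ * u
  obtain ⟨x, hx⟩ : ∃ x : ℝ, x = t₁ * u := ⟨_, rfl⟩
  have hx1 : x ≤ 1 := by
    rcases le_or_gt 0 u with hu0 | hu0
    · have : t₁ * u ≤ 1 * u := mul_le_mul_of_nonneg_right ht₁u hu0
      rw [hx]; linarith
    · have : t₁ * u ≤ 0 := mul_nonpos_of_nonneg_of_nonpos ht₁0 (le_of_lt hu0)
      rw [hx]; linarith
  have hxu : 0 < 1 + x ∧ 1 - x ≤ R * (1 + x) := by
    rcases le_or_gt 0 u with hu0 | hu0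
    · have hx0 : 0 ≤ x := by rw [hx]; exact mul_nonneg ht₁0 hu0
      refine ⟨by linarith, ?_⟩
      have : R * 1 ≤ R * (1 + x) := mul_le_mul_of_nonneg_left (by linarith) hR0
      linarith
    · have hxgu : u ≤ x := by
        have : 1 * u ≤ t₁ * u := mul_le_mul_of_nonpos_right ht₁u (le_of_lt hu0)
        rw [hx]; linarith
      refine ⟨by linarith, ?_⟩
      have : R * (1 + u) ≤ R * (1 + x) := mul_le_mul_of_nonneg_left (by linarith) hR0
      linarith
  obtain ⟨hx2, hfx⟩ := hxu
  -- Step 3 : v = q x s₃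
  obtain ⟨v, hv⟩ : ∃ v : ℝ, v = q x s₃ := ⟨_, rfl⟩
  have hden : (7:ℝ)/8 * (1 + x) ≤ 1 + x * s₃ := by
    have h1 : 1 + x * s₃ = s₃ * (1 + x) + (1 - s₃) := by ring
    have h2 : (7:ℝ)/8 * (1 + x) ≤ s₃ * (1 + x) :=
      mul_le_mul_of_nonneg_right hs₃7 (le_of_lt hx2)
    linarith [h2, hs₃u]
  have hD₂ : 0 < 1 + x * s₃ := by linarith [hden, hx2]
  have h1v : 1 - v = (1 - x) * (1 - s₃) / (1 + x * s₃) := by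
    rw [hv]; exact one_sub_q _ _ (ne_of_gt hD₂)
  have hv1 : v ≤ 1 := by
    have : 0 ≤ 1 - v := by
      rw [h1v]
      apply div_nonneg _ (le_of_lt hD₂)
      apply mul_nonneg <;> linarith
    linarith
  have hvbound : 1 - v ≤ 8/7 * R * (A * δ) := by
    rw [h1v]
    have hnum : (1 - x) * (1 - s₃) ≤ R * (1 + x) * (A * δ) :=
      mul_le_mul hfx (by linarith) (by linarith) (by positivity)
    have hx2' : (1 + x) ≠ 0 := ne_of_gt hx2
    calc (1 - x) * (1 - s₃) / (1 + x * s₃)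
        ≤ R * (1 + x) * (A * δ) / ((7:ℝ)/8 * (1 + x)) :=
          div_le_div₀ (by positivity) hnum (by positivity) hden
      _ = 8/7 * R * (A * δ) := by
          field_simp
  have hvC : 1 - v ≤ 64/105 * ((2 * A ^ 2 / a) * δ) := by
    have heq : 8/7 * R * (A * δ) = 64/105 * ((2 * A ^ 2 / a) * δ) := by
      rw [hR]; field_simp; ring
    linarith
  have h2Aa : (2 * A ^ 2 / a) * δ ≤ C * δ := by linarith
  have hvhalf : 1 - v ≤ 1/3 := by linarith
  -- Step 4 : y = t₂ * v
  obtain ⟨y, hy⟩ : ∃ y : ℝ, y = t₂ * v := ⟨_, rfl⟩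
  have hv0 : 0 ≤ v := by linarith
  have hy1 : y ≤ 1 := by
    have : t₂ * v ≤ 1 * 1 := mul_le_mul ht₂u hv1 hv0 (by norm_num)
    rw [hy]; linarith
  have hyC : 1 - y ≤ C * δ := by
    have h1 : (1 - t₂) * v ≤ (1 - t₂) * 1 :=
      mul_le_mul_of_nonneg_left hv1 (by linarith)
    have hyid : 1 - y = (1 - v) + (1 - t₂) * v := by rw [hy]; ring
    linarith
  have hyhalf : (1:ℝ)/2 < y := by linarith
  -- Final step : w = q y s₄
  have hD₃ : (23:ℝ)/16 ≤ 1 + y * s₄ := by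
    have : (1:ℝ)/2 * (7/8) ≤ y * s₄ :=
      mul_le_mul (le_of_lt hyhalf) hs₄7 (by norm_num) (by linarith)
    linarith
  have hD₃0 : 0 < 1 + y * s₄ := by linarith
  have h1w : 1 - q y s₄ = (1 - y) * (1 - s₄) / (1 + y * s₄) := one_sub_q _ _ (ne_of_gt hD₃0)
  have hnum : (1 - y) * (1 - s₄) ≤ (C * δ) * (A * δ) :=
    mul_le_mul hyC (by linarith) (by linarith) hCδ0
  have hfinal : 1 - q y s₄ ≤ (C * δ) * (A * δ) / (23/16) := by
    rw [h1w]
    exact div_le_div₀ (by positivity) hnum (by norm_num) hD₃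
  have hAC : 4 * A ≤ C := by rw [hC]; linarith
  have hAδC : A * δ ≤ C * δ / 4 := by
    have := mul_le_mul_of_nonneg_right hAC hδ0
    linarith
  have hstep : (C * δ) * (A * δ) ≤ C ^ 2 * δ ^ 2 / 4 := by
    have hh := mul_le_mul_of_nonneg_left hAδC hCδ0
    linarith [hh]
  have hC2δ2 : 0 ≤ C ^ 2 * δ ^ 2 := by positivity
  have hlast : 1 - q y s₄ ≤ 4/5 * C ^ 2 * δ ^ 2 := by
    have h2 : (C * δ) * (A * δ) / (23/16) = 16/23 * ((C * δ) * (A * δ)) := by ring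
    linarith
  have hform : q (t₂ * q (t₁ * q s₁ s₂) s₃) s₄ = q y s₄ := by
    rw [hy, hv, hx, hu]
  rw [hform]
  linarith
end
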